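/- Einstein addition and Möbius addition on the same c-ball V_c are isomorphic via doubling: for all A, B, a ∈ V_c, (i) A ⊕_E B = 2 ⊙ ((½ ⊙ A) ⊕_M (½ ⊙ B)); (ii) A ⊕_M B = ½ ⊙ ((2 ⊙ A) ⊕_E (2 ⊙ B)); (iii) γ_{2⊙a} = 2·γ_a² − 1; and (iv) γ_{2⊙a}·(2 ⊙ a) = 2·γ_a²·a. -/

import Mathlib

open scoped RealInnerProductSpace

noncomputable def gamma {V : Type*} [NormedAddCommGroup V] [InnerProductSpace ℝ V]
    (c : ℝ) (u : V) : ℝ :=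
  1 / Real.sqrt (1 - ‖u‖ ^ 2 / c ^ 2)

noncomputable def eAdd {V : Type*} [NormedAddCommGroup V] [InnerProductSpace ℝ V]
    (c : ℝ) (u v : V) : V :=
  (1 / (1 + ⟪u, v⟫ / c ^ 2)) •
    (u + (1 / gamma c u) • v +
      ((1 / c ^ 2) * (gamma c u / (1 + gamma c u)) * ⟪u, v⟫) • u)

noncomputable def eGyr {V : Type*} [NormedAddCommGroup V] [InnerProductSpace ℝ V]
    (c : ℝ) (u v w : V) : V :=
  eAdd c (-(eAdd c u v)) (eAdd c u (eAdd c v w))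

noncomputable def eCoadd {V : Type*} [NormedAddCommGroup V] [InnerProductSpace ℝ V]
    (c : ℝ) (u v : V) : V :=
  eAdd c u (eGyr c u (-v) v)

noncomputable def mAdd {V : Type*} [NormedAddCommGroup V] [InnerProductSpace ℝ V]
    (s : ℝ) (u v : V) : V :=
  (1 / (1 + (2 / s ^ 2) * ⟪u, v⟫ + (1 / s ^ 4) * ‖u‖ ^ 2 * ‖v‖ ^ 2)) •
    ((1 + (2 / s ^ 2) * ⟪u, v⟫ + (1 / s ^ 2) * ‖v‖ ^ 2) • u +
      (1 - (1 / s ^ 2) * ‖u‖ ^ 2) • v)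

noncomputable def mGyr {V : Type*} [NormedAddCommGroup V] [InnerProductSpace ℝ V]
    (s : ℝ) (u v w : V) : V :=
  mAdd s (-(mAdd s u v)) (mAdd s u (mAdd s v w))

noncomputable def mCoadd {V : Type*} [NormedAddCommGroup V] [InnerProductSpace ℝ V]
    (s : ℝ) (u v : V) : V :=
  mAdd s u (mGyr s u (-v) v)

noncomputable def artanh (x : ℝ) : ℝ :=
  (1 / 2) * Real.log ((1 + x) / (1 - x))

open Classical in
noncomputable def sMul {V : Type*} [NormedAddCommGroup V] [InnerProductSpace ℝ V]
    (c : ℝ) (r : ℝ) (v : V) : V :=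
  if v = 0 then 0 else (c * Real.tanh (r * artanh (‖v‖ / c)) / ‖v‖) • v

variable {V : Type*} [NormedAddCommGroup V] [InnerProductSpace ℝ V]

/-!
Write a nonzero point of the ball as `(c * tanh x) • e` with `‖e‖ = 1`. Then
`r ⊙ ((c * tanh x) • e) = (c * tanh (r * x)) • e`, so `⊙` is an action of `(ℝ, *)` on the ball
and `½ ⊙` inverts `2 ⊙`. Parts (i) and (ii) therefore both reduce to doubling being a
homomorphism, `2 ⊙ (u ⊕_M v) = (2 ⊙ u) ⊕_E (2 ⊙ v)`. With `2 ⊙ v = (2c² / (c² + ‖v‖²)) • v`,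
both sides are the same multiple of `(c² + 2⟨u, v⟩ + ‖v‖²) u + (c² - ‖u‖²) v`, which is `c²` times
the numerator of the Möbius sum. On the Möbius side this uses
`c² - ‖u ⊕_M v‖² = c² (c² - ‖u‖²) (c² - ‖v‖²) / (c⁴ + 2c²⟨u, v⟩ + ‖u‖²‖v‖²)`, which also
shows that the Möbius sum stays in the ball. Parts (iii) and (iv) follow from
`γ_{2 ⊙ v} = (c² + ‖v‖²) / (c² - ‖v‖²)` and `γ_v² = c² / (c² - ‖v‖²)`.
-/

theorem Real.tanh_two_mul (x : ℝ) : Real.tanh (2 * x) = 2 * Real.tanh x / (1 + Real.tanh x ^ 2) := by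
  have := Real.cosh_pos x
  rw [Real.tanh_eq_sinh_div_cosh, Real.tanh_eq_sinh_div_cosh, Real.sinh_two_mul, Real.cosh_two_mul]
  field_simp

theorem artanh_eq_real_artanh {t : ℝ} (ht : t ∈ Set.Icc (-1) 1) : artanh t = Real.artanh t :=
  (Real.artanh_eq_half_log ht).symm

section Ball

variable {c : ℝ} {u v : V}

theorem sMul_zero (c r : ℝ) : sMul c r (0 : V) = 0 := by
  simp [sMul]

theorem norm_sMul_lt (hc : 0 < c) (r : ℝ) (v : V) : ‖sMul c r v‖ < c := by
  by_cases hv : v = 0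
  · simpa [hv, sMul_zero] using hc
  have hv' : 0 < ‖v‖ := norm_pos_iff.2 hv
  rw [sMul, if_neg hv, norm_smul, Real.norm_eq_abs, abs_div, abs_mul, abs_of_pos hc,
    abs_of_pos hv', div_mul_cancel₀ _ hv'.ne']
  simpa using mul_lt_mul_of_pos_left (Real.abs_tanh_lt_one _) hc

theorem sMul_smul_tanh (hc : 0 < c) {e : V} (he : ‖e‖ = 1) (r x : ℝ) :
    sMul c r ((c * Real.tanh x) • e) = (c * Real.tanh (r * x)) • e := by
  wlog hx : 0 < x generalizing e x
  · rcases (not_lt.1 hx).eq_or_lt with rfl | hneg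
    · simp [sMul_zero]
    · simpa [Real.tanh_neg, neg_smul, smul_neg, mul_neg] using
        this (e := -e) (by simpa) (-x) (by linarith)
  have ht : 0 < Real.tanh x := by
    rw [Real.tanh_eq_sinh_div_cosh]
    exact div_pos (Real.sinh_pos_iff.2 hx) (Real.cosh_pos x)
  have hnorm : ‖(c * Real.tanh x) • e‖ = c * Real.tanh x := by
    rw [norm_smul, he, mul_one, Real.norm_of_nonneg (by positivity)]
  have hne : (c * Real.tanh x) • e ≠ 0 := by
    rw [← norm_pos_iff, hnorm]; positivity
  have hmem : Real.tanh x ∈ Set.Icc (-1) 1 :=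
    ⟨(Real.neg_one_lt_tanh x).le, (Real.tanh_lt_one x).le⟩
  rw [sMul, if_neg hne, hnorm, mul_div_cancel_left₀ _ hc.ne', artanh_eq_real_artanh hmem,
    Real.artanh_tanh, smul_smul]
  congr 1
  field_simp

theorem exists_eq_smul_tanh (hv : ‖v‖ < c) (hv0 : v ≠ 0) :
    ∃ e : V, ‖e‖ = 1 ∧ ∃ x : ℝ, v = (c * Real.tanh x) • e := by
  have hc : 0 < c := (norm_nonneg v).trans_lt hv
  have hv' : 0 < ‖v‖ := norm_pos_iff.2 hv0
  refine ⟨‖v‖⁻¹ • v, by simp [norm_smul, hv'.ne'], Real.artanh (‖v‖ / c), ?_⟩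
  rw [Real.tanh_artanh ⟨by linarith [div_pos hv' hc], (div_lt_one hc).2 hv⟩, smul_smul]
  field_simp
  simp

theorem sMul_sMul (hv : ‖v‖ < c) (r s : ℝ) : sMul c r (sMul c s v) = sMul c (r * s) v := by
  have hc : 0 < c := (norm_nonneg v).trans_lt hv
  rcases eq_or_ne v 0 with rfl | hv0
  · simp only [sMul_zero]
  obtain ⟨e, he, x, rfl⟩ := exists_eq_smul_tanh hv hv0
  simp only [sMul_smul_tanh hc he, mul_assoc]

theorem one_sMul (hv : ‖v‖ < c) : sMul c 1 v = v := by
  have hc : 0 < c := (norm_nonneg v).trans_lt hv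
  rcases eq_or_ne v 0 with rfl | hv0
  · exact sMul_zero c 1
  obtain ⟨e, he, x, rfl⟩ := exists_eq_smul_tanh hv hv0
  rw [sMul_smul_tanh hc he, one_mul]

theorem sMul_two_sMul_half (hv : ‖v‖ < c) : sMul c 2 (sMul c (1 / 2) v) = v := by
  rw [sMul_sMul hv]
  norm_num [one_sMul hv]

theorem sMul_half_sMul_two (hv : ‖v‖ < c) : sMul c (1 / 2) (sMul c 2 v) = v := by
  rw [sMul_sMul hv]
  norm_num [one_sMul hv]

theorem sMul_two (hv : ‖v‖ < c) : sMul c 2 v = (2 * c ^ 2 / (c ^ 2 + ‖v‖ ^ 2)) • v := by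
  have hc : 0 < c := (norm_nonneg v).trans_lt hv
  rcases eq_or_ne v 0 with rfl | hv0
  · simp only [sMul_zero, smul_zero]
  obtain ⟨e, he, x, rfl⟩ := exists_eq_smul_tanh hv hv0
  rw [sMul_smul_tanh hc he, Real.tanh_two_mul, smul_smul, norm_smul, he, mul_one,
    Real.norm_eq_abs, sq_abs]
  congr 1
  field_simp

theorem gamma_sq (hv : ‖v‖ < c) : gamma c v ^ 2 = c ^ 2 / (c ^ 2 - ‖v‖ ^ 2) := by
  have hc : 0 < c := (norm_nonneg v).trans_lt hv
  have h : 0 < 1 - ‖v‖ ^ 2 / c ^ 2 := by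
    rw [sub_pos, div_lt_one (by positivity)]
    nlinarith [norm_nonneg v]
  rw [gamma, div_pow, one_pow, Real.sq_sqrt h.le]
  field_simp

theorem gamma_sMul_two (hv : ‖v‖ < c) :
    gamma c (sMul c 2 v) = (c ^ 2 + ‖v‖ ^ 2) / (c ^ 2 - ‖v‖ ^ 2) := by
  have hc : 0 < c := (norm_nonneg v).trans_lt hv
  have hsub : 0 < c ^ 2 - ‖v‖ ^ 2 := by nlinarith [norm_nonneg v]
  have hadd : 0 < c ^ 2 + ‖v‖ ^ 2 := by positivity
  rw [gamma, sMul_two hv, norm_smul, Real.norm_of_nonneg (by positivity),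
    show 1 - (2 * c ^ 2 / (c ^ 2 + ‖v‖ ^ 2) * ‖v‖) ^ 2 / c ^ 2 =
      ((c ^ 2 - ‖v‖ ^ 2) / (c ^ 2 + ‖v‖ ^ 2)) ^ 2 by field_simp; ring,
    Real.sqrt_sq (by positivity), one_div_div]

theorem norm_smul_add_smul_sq (x y : ℝ) (u v : V) :
    ‖x • u + y • v‖ ^ 2 = x ^ 2 * ‖u‖ ^ 2 + 2 * (x * y) * ⟪u, v⟫ + y ^ 2 * ‖v‖ ^ 2 := by
  rw [norm_add_sq_real, norm_smul, norm_smul, real_inner_smul_left, real_inner_smul_right,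
    Real.norm_eq_abs, Real.norm_eq_abs, mul_pow, mul_pow, sq_abs, sq_abs]
  ring

theorem mAdd_eq_smul (hc : c ≠ 0) (u v : V) :
    mAdd c u v = (c ^ 2 / (c ^ 4 + 2 * c ^ 2 * ⟪u, v⟫ + ‖u‖ ^ 2 * ‖v‖ ^ 2)) •
      ((c ^ 2 + 2 * ⟪u, v⟫ + ‖v‖ ^ 2) • u + (c ^ 2 - ‖u‖ ^ 2) • v) := by
  have hD : 1 + (2 / c ^ 2) * ⟪u, v⟫ + (1 / c ^ 4) * ‖u‖ ^ 2 * ‖v‖ ^ 2 =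
      (c ^ 4 + 2 * c ^ 2 * ⟪u, v⟫ + ‖u‖ ^ 2 * ‖v‖ ^ 2) / c ^ 4 := by
    field_simp
  rw [mAdd, hD]
  simp only [smul_add, smul_smul]
  congr 2 <;> field_simp

theorem mAdd_denom_pos (hu : ‖u‖ < c) (hv : ‖v‖ < c) :
    0 < c ^ 4 + 2 * c ^ 2 * ⟪u, v⟫ + ‖u‖ ^ 2 * ‖v‖ ^ 2 := by
  have hc : 0 < c := (norm_nonneg u).trans_lt hu
  have huv : ‖u‖ * ‖v‖ < c ^ 2 := by nlinarith [norm_nonneg u, norm_nonneg v]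
  have hinner : -(‖u‖ * ‖v‖) ≤ ⟪u, v⟫ := (abs_le.1 (abs_real_inner_le_norm u v)).1
  nlinarith [mul_pos (sub_pos.2 huv) (sub_pos.2 huv), pow_pos hc 2]

theorem sq_sub_norm_mAdd_sq (hc : c ≠ 0) (hN : c ^ 4 + 2 * c ^ 2 * ⟪u, v⟫ + ‖u‖ ^ 2 * ‖v‖ ^ 2 ≠ 0) :
    c ^ 2 - ‖mAdd c u v‖ ^ 2 =
      c ^ 2 * (c ^ 2 - ‖u‖ ^ 2) * (c ^ 2 - ‖v‖ ^ 2) / (c ^ 4 + 2 * c ^ 2 * ⟪u, v⟫ + ‖u‖ ^ 2 * ‖v‖ ^ 2) := by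
  rw [mAdd_eq_smul hc, norm_smul, mul_pow, norm_smul_add_smul_sq, Real.norm_eq_abs, sq_abs]
  generalize hNdef : c ^ 4 + 2 * c ^ 2 * ⟪u, v⟫ + ‖u‖ ^ 2 * ‖v‖ ^ 2 = N at hN ⊢
  field_simp
  rw [← hNdef]
  ring

theorem norm_mAdd_lt (hu : ‖u‖ < c) (hv : ‖v‖ < c) : ‖mAdd c u v‖ < c := by
  have hc : 0 < c := (norm_nonneg u).trans_lt hu
  have hN := mAdd_denom_pos hu hv
  have hu' : 0 < c ^ 2 - ‖u‖ ^ 2 := by nlinarith [norm_nonneg u]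
  have hv' : 0 < c ^ 2 - ‖v‖ ^ 2 := by nlinarith [norm_nonneg v]
  have key := sq_sub_norm_mAdd_sq hc.ne' hN.ne'
  have : 0 < c ^ 2 - ‖mAdd c u v‖ ^ 2 := by rw [key]; positivity
  nlinarith [norm_nonneg (mAdd c u v)]

theorem doubling_denom_pos (hu : ‖u‖ < c) (hv : ‖v‖ < c) :
    0 < (c ^ 2 + ‖u‖ ^ 2) * (c ^ 2 + ‖v‖ ^ 2) + 4 * c ^ 2 * ⟪u, v⟫ := by
  have hc : 0 < c := (norm_nonneg u).trans_lt hu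
  have huv : ‖u‖ * ‖v‖ < c ^ 2 := by nlinarith [norm_nonneg u, norm_nonneg v]
  have hinner : -(‖u‖ * ‖v‖) ≤ ⟪u, v⟫ := (abs_le.1 (abs_real_inner_le_norm u v)).1
  nlinarith [mul_pos (sub_pos.2 huv) (sub_pos.2 huv), sq_nonneg (‖u‖ - ‖v‖), pow_pos hc 2]

theorem eAdd_sMul_two_sMul_two (hu : ‖u‖ < c) (hv : ‖v‖ < c) :
    eAdd c (sMul c 2 u) (sMul c 2 v) =
      (2 * c ^ 2 / ((c ^ 2 + ‖u‖ ^ 2) * (c ^ 2 + ‖v‖ ^ 2) + 4 * c ^ 2 * ⟪u, v⟫)) •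
        ((c ^ 2 + 2 * ⟪u, v⟫ + ‖v‖ ^ 2) • u + (c ^ 2 - ‖u‖ ^ 2) • v) := by
  have hc : 0 < c := (norm_nonneg u).trans_lt hu
  have hE := doubling_denom_pos hu hv
  have hsub : 0 < c ^ 2 - ‖u‖ ^ 2 := by nlinarith [norm_nonneg u]
  rw [eAdd, gamma_sMul_two hu, sMul_two hu, sMul_two hv]
  simp only [real_inner_smul_left, real_inner_smul_right]
  generalize ⟪u, v⟫ = p at hE ⊢
  generalize ‖u‖ = x at hE hsub ⊢
  generalize ‖v‖ = y at hE ⊢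
  match_scalars
  · field_simp
    ring
  · field_simp
    ring

theorem sMul_two_mAdd_eq (hu : ‖u‖ < c) (hv : ‖v‖ < c) :
    sMul c 2 (mAdd c u v) =
      (2 * c ^ 2 / ((c ^ 2 + ‖u‖ ^ 2) * (c ^ 2 + ‖v‖ ^ 2) + 4 * c ^ 2 * ⟪u, v⟫)) •
        ((c ^ 2 + 2 * ⟪u, v⟫ + ‖v‖ ^ 2) • u + (c ^ 2 - ‖u‖ ^ 2) • v) := by
  have hc : 0 < c := (norm_nonneg u).trans_lt hu
  have hN := mAdd_denom_pos hu hv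
  have hE := doubling_denom_pos hu hv
  have hw : c ^ 2 + ‖mAdd c u v‖ ^ 2 =
      c ^ 2 * ((c ^ 2 + ‖u‖ ^ 2) * (c ^ 2 + ‖v‖ ^ 2) + 4 * c ^ 2 * ⟪u, v⟫) /
        (c ^ 4 + 2 * c ^ 2 * ⟪u, v⟫ + ‖u‖ ^ 2 * ‖v‖ ^ 2) := by
    have key := sq_sub_norm_mAdd_sq hc.ne' hN.ne'
    rw [show ‖mAdd c u v‖ ^ 2 = c ^ 2 - (c ^ 2 - ‖mAdd c u v‖ ^ 2) by ring, key]
    generalize hNdef : c ^ 4 + 2 * c ^ 2 * ⟪u, v⟫ + ‖u‖ ^ 2 * ‖v‖ ^ 2 = N at hN ⊢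
    field_simp
    rw [← hNdef]
    ring
  rw [sMul_two (norm_mAdd_lt hu hv), hw, mAdd_eq_smul hc.ne', smul_smul]
  congr 1
  generalize c ^ 4 + 2 * c ^ 2 * ⟪u, v⟫ + ‖u‖ ^ 2 * ‖v‖ ^ 2 = N at hN ⊢
  field_simp

theorem sMul_two_mAdd (hu : ‖u‖ < c) (hv : ‖v‖ < c) :
    sMul c 2 (mAdd c u v) = eAdd c (sMul c 2 u) (sMul c 2 v) :=
  (sMul_two_mAdd_eq hu hv).trans (eAdd_sMul_two_sMul_two hu hv).symm

end Ball

theorem einstein_mobius_isomorphism_general (c : ℝ) (A B a : V)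
    (hA : ‖A‖ < c) (hB : ‖B‖ < c) (ha : ‖a‖ < c) :
    eAdd c A B = sMul c 2 (mAdd c (sMul c (1 / 2) A) (sMul c (1 / 2) B)) ∧
    mAdd c A B = sMul c (1 / 2) (eAdd c (sMul c 2 A) (sMul c 2 B)) ∧
    gamma c (sMul c 2 a) = 2 * gamma c a ^ 2 - 1 ∧
    gamma c (sMul c 2 a) • sMul c 2 a = (2 * gamma c a ^ 2) • a := by
  have hc : 0 < c := (norm_nonneg a).trans_lt ha
  have hsub : 0 < c ^ 2 - ‖a‖ ^ 2 := by nlinarith [norm_nonneg a]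
  refine ⟨?_, ?_, ?_, ?_⟩
  · rw [sMul_two_mAdd (norm_sMul_lt hc _ A) (norm_sMul_lt hc _ B), sMul_two_sMul_half hA,
      sMul_two_sMul_half hB]
  · rw [← sMul_two_mAdd hA hB, sMul_half_sMul_two (norm_mAdd_lt hA hB)]
  · rw [gamma_sMul_two ha, gamma_sq ha]
    field_simp
    ring
  · rw [gamma_sMul_two ha, sMul_two ha, smul_smul, gamma_sq ha]
    congr 1
    field_simp

theorem einstein_mobius_isomorphism (c : ℝ) (hc : 0 < c) (A B a : V)
    (hA : ‖A‖ < c) (hB : ‖B‖ < c) (ha : ‖a‖ < c) :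
    eAdd c A B = sMul c 2 (mAdd c (sMul c (1 / 2) A) (sMul c (1 / 2) B)) ∧
    mAdd c A B = sMul c (1 / 2) (eAdd c (sMul c 2 A) (sMul c 2 B)) ∧
    gamma c (sMul c 2 a) = 2 * gamma c a ^ 2 - 1 ∧
    gamma c (sMul c 2 a) • sMul c 2 a = (2 * gamma c a ^ 2) • a :=
  einstein_mobius_isomorphism_general c A B a hA hB ha
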